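/- arXiv:1803.02760 — 2 statements merged into one kernel-verified Lean document; each statement's English description precedes it below -/
import Mathlib

section
/- For all real k₂, m, Ω, the transfer matrix of the Dirac-mass armchair problem, 𝒜 := i·k₂·Γ¹Γ² + i·Ω·Γ⁰Γ¹ + i·m·Γ¹, satisfies 𝒜·𝒜 = (k₂² + m² − Ω²)·1, where 1 is the 4×4 identity matrix. In particular the eigenvalues of 𝒜 are square roots of k₂² + m² − Ω². -/
open Matrix Complex

noncomputable section

/-- The 2×2 identity (σ₀). -/
def σ0 : Matrix (Fin 2) (Fin 2) ℂ := 1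
/-- Pauli matrix σ₁. -/
def σ1 : Matrix (Fin 2) (Fin 2) ℂ := !![0, 1; 1, 0]
/-- Pauli matrix σ₂. -/
def σ2 : Matrix (Fin 2) (Fin 2) ℂ := !![0, -Complex.I; Complex.I, 0]
/-- Pauli matrix σ₃. -/
def σ3 : Matrix (Fin 2) (Fin 2) ℂ := !![1, 0; 0, -1]

/-- Kronecker product of two 2×2 complex matrices, as a 4×4 matrix
(the first factor indexes the 2×2 blocks). -/
def kron (A B : Matrix (Fin 2) (Fin 2) ℂ) : Matrix (Fin 4) (Fin 4) ℂ :=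
  !![A 0 0 * B 0 0, A 0 0 * B 0 1, A 0 1 * B 0 0, A 0 1 * B 0 1;
     A 0 0 * B 1 0, A 0 0 * B 1 1, A 0 1 * B 1 0, A 0 1 * B 1 1;
     A 1 0 * B 0 0, A 1 0 * B 0 1, A 1 1 * B 0 0, A 1 1 * B 0 1;
     A 1 0 * B 1 0, A 1 0 * B 1 1, A 1 1 * B 1 0, A 1 1 * B 1 1]

/-- Γ⁰ = −(σ₂ ⊗ σ₁). -/
def Γ0 : Matrix (Fin 4) (Fin 4) ℂ := -(kron σ2 σ1)
/-- Γ¹ = −i (σ₁ ⊗ σ₀). -/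
def Γ1 : Matrix (Fin 4) (Fin 4) ℂ := -(Complex.I • kron σ1 σ0)
/-- Γ² = −i (σ₂ ⊗ σ₃). -/
def Γ2 : Matrix (Fin 4) (Fin 4) ℂ := -(Complex.I • kron σ2 σ3)
/-- Γ³ = −i (σ₂ ⊗ σ₂). -/
def Γ3 : Matrix (Fin 4) (Fin 4) ℂ := -(Complex.I • kron σ2 σ2)
/-- Γ⁵ = i Γ⁰Γ¹Γ²Γ³. -/
def Γ5 : Matrix (Fin 4) (Fin 4) ℂ := Complex.I • (Γ0 * Γ1 * Γ2 * Γ3)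

/-- The free graphene Hamiltonian in momentum space,
H₀(k₁,k₂) = −(k₁ (σ₃ ⊗ σ₁) + k₂ (σ₀ ⊗ σ₂)). -/
def H0 (k1 k2 : ℝ) : Matrix (Fin 4) (Fin 4) ℂ :=
  -((k1 : ℂ) • kron σ3 σ1 + (k2 : ℂ) • kron σ0 σ2)

lemma G12_eq : Γ1 * Γ2 = !![-Complex.I,0,0,0; 0,Complex.I,0,0; 0,0,Complex.I,0; 0,0,0,-Complex.I] := by
  ext i j
  fin_cases i <;> fin_cases j <;>
    simp [Γ1, Γ2, σ0, σ1, σ2, σ3, kron, Matrix.mul_apply, Fin.sum_univ_four, Matrix.one_apply, Matrix.vecHead, Matrix.vecTail]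

lemma G01_eq : Γ0 * Γ1 = !![0,1,0,0; 1,0,0,0; 0,0,0,-1; 0,0,-1,0] := by
  ext i j
  fin_cases i <;> fin_cases j <;>
    simp [Γ0, Γ1, σ0, σ1, σ2, σ3, kron, Matrix.mul_apply, Fin.sum_univ_four, Matrix.one_apply, Matrix.vecHead, Matrix.vecTail]

lemma G1_eq : Γ1 = !![0,0,-Complex.I,0; 0,0,0,-Complex.I; -Complex.I,0,0,0; 0,-Complex.I,0,0] := by
  ext i j
  fin_cases i <;> fin_cases j <;> simp [Γ1, σ0, σ1, kron, Matrix.one_apply, Matrix.vecHead, Matrix.vecTail]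

/-- the transfer matrix 𝒜 = i k₂ Γ¹Γ² + i Ω Γ⁰Γ¹ + i m Γ¹ squares to
(k₂² + m² − Ω²)·1; in particular its eigenvalues are square roots of k₂² + m² − Ω². -/
theorem transfer_matrix_square_dirac_mass (k2 m Ω : ℝ)
    (A : Matrix (Fin 4) (Fin 4) ℂ)
    (hA : A = (Complex.I * (k2 : ℂ)) • (Γ1 * Γ2) + (Complex.I * (Ω : ℂ)) • (Γ0 * Γ1)
        + (Complex.I * (m : ℂ)) • Γ1) :
    A * A = ((k2 ^ 2 + m ^ 2 - Ω ^ 2 : ℝ) : ℂ) • (1 : Matrix (Fin 4) (Fin 4) ℂ) ∧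
    ∀ (μ : ℂ) (v : Fin 4 → ℂ), v ≠ 0 → A.mulVec v = μ • v →
      μ ^ 2 = ((k2 ^ 2 + m ^ 2 - Ω ^ 2 : ℝ) : ℂ) := by
  have hAe : A = !![(k2:ℂ), Complex.I * Ω, (m:ℂ), 0;
      Complex.I * Ω, -(k2:ℂ), 0, (m:ℂ);
      (m:ℂ), 0, -(k2:ℂ), -(Complex.I * Ω);
      0, (m:ℂ), -(Complex.I * Ω), (k2:ℂ)] := by
    rw [hA, G12_eq, G01_eq, G1_eq]
    ext i j
    fin_cases i <;> fin_cases j <;>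
      simp [Matrix.vecHead, Matrix.vecTail]
    all_goals (ring_nf; try simp [Complex.I_sq]; try ring)
  have hsq : A * A = ((k2 ^ 2 + m ^ 2 - Ω ^ 2 : ℝ) : ℂ) • (1 : Matrix (Fin 4) (Fin 4) ℂ) := by
    rw [hAe]
    ext i j
    fin_cases i <;> fin_cases j <;>
      simp [Matrix.mul_apply, Fin.sum_univ_four, Matrix.one_apply]
    all_goals (ring_nf; try simp [Complex.I_sq]; try ring)
  refine ⟨hsq, fun μ v hv hAv => ?_⟩
  have h2 : (A * A).mulVec v = (μ ^ 2) • v := by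
    rw [← Matrix.mulVec_mulVec, hAv, Matrix.mulVec_smul, hAv, smul_smul, sq]
  rw [hsq] at h2
  simp only [Matrix.smul_mulVec, Matrix.one_mulVec] at h2
  by_contra hne
  exact hv (by
    have := sub_eq_zero.mpr h2.symm
    rw [← sub_smul] at this
    exact (smul_eq_zero.mp this).resolve_left (sub_ne_zero.mpr fun h => hne h) )
end
end

section
/- For α ∈ {1, −1}, the constant spinor v_α := (i·α, −1, −i·α, 1) ∈ ℂ⁴ satisfies: (i) (Γ⁰Γ²)·v_α = α·v_α; (ii) (i·Γ¹)·v_α = −v_α, i.e. (1 + i·Γ¹)·v_α = 0; (iii) ℒ·v_α = −α·v_α, where ℒ := σ₁ ⊗ σ₂. Consequently, for every real k₂ and every W > 0, the constant function φ(x) = v_α solves the massless transverse eigenvalue equation −i·Γ⁰Γ¹·φ'(x) + k₂·Γ⁰Γ²·φ(x) = (α·k₂)·φ(x) for all x, and satisfies the armchair boundary conditions (1 + i·Γ¹)·φ(0) = 0 and (1 + i·Γ¹)·φ(W) = 0. These are the gapless perfectly conducting modes of a metallic armchair graphene nanoribbon. -/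
open Matrix Complex

noncomputable section

/-- The symmetry matrix ℒ = σ₁ ⊗ σ₂. -/
def Lsym : Matrix (Fin 4) (Fin 4) ℂ := kron σ1 σ2

lemma hG02 : Γ0 * Γ2 = !![0,-Complex.I,0,0; Complex.I,0,0,0; 0,0,0,-Complex.I; 0,0,Complex.I,0] := by
  ext i j
  fin_cases i <;> fin_cases j <;>
    simp [Γ0, Γ2, kron, σ1, σ2, σ3, Matrix.mul_apply, Fin.sum_univ_four, Matrix.vecHead, Matrix.vecTail] <;> ring

lemma hiG1 : Complex.I • Γ1 = !![0,0,1,0; 0,0,0,1; 1,0,0,0; 0,1,0,0] := by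
  ext i j
  fin_cases i <;> fin_cases j <;>
   simp [Γ1, kron, σ0, σ1, Matrix.one_apply, Matrix.vecHead, Matrix.vecTail] <;>
   norm_num [Complex.ext_iff]

lemma hL : Lsym = !![0,0,0,-Complex.I; 0,0,Complex.I,0; 0,-Complex.I,0,0; Complex.I,0,0,0] := by
  ext i j
  fin_cases i <;> fin_cases j <;> simp [Lsym, kron, σ1, σ2, Matrix.vecHead, Matrix.vecTail]

/-- the constant spinor v_α = (iα, −1, −iα, 1) is an eigenvector of
Γ⁰Γ² with eigenvalue α, of iΓ¹ with eigenvalue −1, and of ℒ with eigenvalue −α;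
consequently the constant function φ = v_α is a gapless perfectly conducting mode
of the massless armchair nanoribbon, with energy Ω = α k₂, satisfying the armchair
boundary conditions at x = 0 and x = W. -/
theorem gapless_constant_modes (α : ℝ) (hα : α = 1 ∨ α = -1)
    (v : Fin 4 → ℂ)
    (hv : v = ![Complex.I * (α : ℂ), -1, -Complex.I * (α : ℂ), 1]) :
    (Γ0 * Γ2).mulVec v = (α : ℂ) • v ∧
    (Complex.I • Γ1).mulVec v = -v ∧
    ((1 : Matrix (Fin 4) (Fin 4) ℂ) + Complex.I • Γ1).mulVec v = 0 ∧
    Lsym.mulVec v = (-(α : ℂ)) • v ∧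
    ∀ (k2 W : ℝ), W > 0 →
      (∀ x : ℝ,
        (-Complex.I) • (Γ0 * Γ1).mulVec (deriv (fun _ : ℝ => v) x)
          + (k2 : ℂ) • (Γ0 * Γ2).mulVec v = ((α : ℂ) * (k2 : ℂ)) • v) ∧
      ((1 : Matrix (Fin 4) (Fin 4) ℂ) + Complex.I • Γ1).mulVec v = 0 := by
  subst hv
  have hα2 : (α : ℂ) * (α : ℂ) = 1 := by
    rcases hα with rfl | rfl <;> norm_num
  have h1 : (Γ0 * Γ2).mulVec ![Complex.I * (α : ℂ), -1, -Complex.I * (α : ℂ), 1]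
      = (α : ℂ) • ![Complex.I * (α : ℂ), -1, -Complex.I * (α : ℂ), 1] := by
    rw [hG02]
    funext i
    fin_cases i <;>
      simp [Matrix.mulVec, dotProduct, Fin.sum_univ_four, Matrix.vecHead, Matrix.vecTail]
    all_goals try ring_nf
    all_goals try simp only [Complex.I_sq, show ((α:ℂ))^2 = 1 from by rw [sq, hα2]]
    all_goals ring
  have h2 : (Complex.I • Γ1).mulVec ![Complex.I * (α : ℂ), -1, -Complex.I * (α : ℂ), 1]
      = -![Complex.I * (α : ℂ), -1, -Complex.I * (α : ℂ), 1] := by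
    rw [hiG1]
    funext i
    fin_cases i <;> simp [Matrix.mulVec, dotProduct, Fin.sum_univ_four, Matrix.vecHead, Matrix.vecTail]
  have h3 : ((1 : Matrix (Fin 4) (Fin 4) ℂ) + Complex.I • Γ1).mulVec
      ![Complex.I * (α : ℂ), -1, -Complex.I * (α : ℂ), 1] = 0 := by
    rw [Matrix.add_mulVec, h2, Matrix.one_mulVec, add_neg_cancel]
  have h4 : Lsym.mulVec ![Complex.I * (α : ℂ), -1, -Complex.I * (α : ℂ), 1]
      = (-(α : ℂ)) • ![Complex.I * (α : ℂ), -1, -Complex.I * (α : ℂ), 1] := by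
    rw [hL]
    funext i
    fin_cases i <;>
      simp [Matrix.mulVec, dotProduct, Fin.sum_univ_four, Matrix.vecHead, Matrix.vecTail]
    all_goals try ring_nf
    all_goals try simp only [Complex.I_sq, show ((α:ℂ))^2 = 1 from by rw [sq, hα2]]
    all_goals ring
  refine ⟨h1, h2, h3, h4, fun k2 W _ => ⟨fun x => ?_, h3⟩⟩
  rw [deriv_const', Matrix.mulVec_zero, smul_zero, zero_add, h1, smul_smul]
  rw [mul_comm ((k2:ℂ)) ((α:ℂ))]
end
end
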